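/- For every set C ⊆ V of colluding agents, if each colluding agent independently broadcasts β(c,t) = max(d(c,t) − 2, 1) for all t ≠ c, then the resulting joint broadcast β is admissible. -/

import Mathlib

open SimpleGraph

namespace Intercept

variable {V : Type*}

/-- The perceived-distance vectors after `s` rounds of the synchronization protocol.
Colluding agents (members of `C`) always broadcast `β`; honest agents start with
`0`/`∞` and update by the distance-vector rule. -/
noncomputable def perceived [Fintype V] [DecidableEq V] (G : SimpleGraph V)
    (C : Finset V) (β : V → V → ℕ∞) : ℕ → V → V → ℕ∞
  | 0 => fun i j => if i ∈ C then β i j else if i = j then 0 else ⊤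
  | s + 1 => fun i j =>
      if i ∈ C then β i j
      else min (perceived G C β s i j)
        (1 + ⨅ k ∈ G.neighborSet i, perceived G C β s k j)

/-- The stationary perceived distances `ρ = ρ^n`. -/
noncomputable def rho [Fintype V] [DecidableEq V] (G : SimpleGraph V)
    (C : Finset V) (β : V → V → ℕ∞) : V → V → ℕ∞ :=
  perceived G C β (Fintype.card V)

/-- `k ∈ b(i,t)`:  `k` is a neighbor of `i` minimizing the (stationary) perceived
distance `ρ(·,t)` among all neighbors of `i`; only defined (satisfiable) for `i ≠ t`. -/
def inForwardSet (G : SimpleGraph V) (ρ : V → V → ℕ∞) (i t k : V) : Prop :=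
  i ≠ t ∧ G.Adj i k ∧ ∀ k', G.Adj i k' → ρ k t ≤ ρ k' t

/-- A corresponding path from `s` to `t`: a walk in `G` such that every honest vertex
forwards to a member of its forwarding set `b(·,t)`. -/
def IsCorrPath [Fintype V] [DecidableEq V] (G : SimpleGraph V) (C : Finset V)
    (β : V → V → ℕ∞) (s t : V) (ℓ : ℕ) (v : ℕ → V) : Prop :=
  v 0 = s ∧ v ℓ = t ∧ (∀ i < ℓ, G.Adj (v i) (v (i + 1))) ∧
    ∀ i < ℓ, v i ∉ C → inForwardSet G (rho G C β) (v i) t (v (i + 1))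

/-- A broadcast is admissible if between every ordered pair of distinct vertices
there is a corresponding path. -/
def Admissible [Fintype V] [DecidableEq V] (G : SimpleGraph V) (C : Finset V)
    (β : V → V → ℕ∞) : Prop :=
  ∀ s t : V, s ≠ t → ∃ ℓ v, IsCorrPath G C β s t ℓ v

/-- The pair `(s,t)` is captured if every corresponding path from `s` to `t`
contains a colluding vertex. -/
def Captured [Fintype V] [DecidableEq V] (G : SimpleGraph V) (C : Finset V)
    (β : V → V → ℕ∞) (s t : V) : Prop :=
  ∀ ℓ v, IsCorrPath G C β s t ℓ v → ∃ i ≤ ℓ, v i ∈ C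

/-- `N(C,β)`: the number of captured ordered pairs of distinct vertices. -/
noncomputable def numCaptured [Fintype V] [DecidableEq V] (G : SimpleGraph V)
    (C : Finset V) (β : V → V → ℕ∞) : ℕ :=
  Set.ncard {p : V × V | p.1 ≠ p.2 ∧ Captured G C β p.1 p.2}


/-- The broadcast in which each colluding agent independently lies by two:
`β*(c,t) = max (d(c,t) - 2) 1` for `t ≠ c`, and `β*(c,c) = 0`. -/
noncomputable def betaStar [DecidableEq V] (G : SimpleGraph V) : V → V → ℕ∞ :=
  fun c t => if c = t then 0 else ((max (G.dist c t - 2) 1 : ℕ) : ℕ∞)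

end Intercept

/-!
Colluders never over-report (`β* ≤ d`) and under-report by at most two, and both properties
propagate to the stationary perceived distances: `d - 2 ≤ ρ ≤ d` everywhere. A corresponding
path is then built greedily, decreasing the potential `ρ(·,t) + 2 d(·,t)`. An honest vertex
forwards to a minimiser of `ρ(·,t)`, which lowers `ρ` by at least one; among the minimisers
there is one not farther from `t`, since a minimiser one step farther has `ρ ≥ d - 2`, which
already ties with the shortest-path neighbour. A colluder forwards along a shortest path,
lowering `d` by one while raising `ρ` by at most one.
-/

namespace SimpleGraph

variable {V : Type*} {G : SimpleGraph V} {u v : V}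

theorem Adj.dist_le_dist_add_one {w : V} (hadj : G.Adj u w) (v : V) :
    G.dist u v ≤ G.dist w v + 1 := by
  rw [dist_comm, dist_comm (u := w)]
  rcases hadj.symm.diff_dist_adj (u := v) with h | h | h <;> omega

theorem Reachable.exists_adj_dist_add_one (hr : G.Reachable u v) (hne : u ≠ v) :
    ∃ w, G.Adj u w ∧ G.dist w v + 1 = G.dist u v := by
  obtain ⟨p, hp⟩ := hr.exists_walk_length_eq_dist
  cases p with
  | nil => exact absurd rfl hne
  | cons hadj q =>
    refine ⟨_, hadj, le_antisymm ?_ (hadj.dist_le_dist_add_one v)⟩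
    rw [← hp, Walk.length_cons]
    exact Nat.succ_le_succ (dist_le q)

theorem Connected.dist_lt_card [Fintype V] (hG : G.Connected) (u v : V) :
    G.dist u v < Fintype.card V := by
  obtain ⟨p, hp, hlen⟩ := hG.exists_path_of_dist u v
  exact hlen ▸ hp.length_lt

end SimpleGraph

namespace Intercept

variable {V : Type*}

section

variable [Fintype V] [DecidableEq V] {G : SimpleGraph V} {C : Finset V} {β : V → V → ℕ∞}

theorem perceived_of_mem {i : V} (hi : i ∈ C) (s : ℕ) (j : V) :
    perceived G C β s i j = β i j := by
  cases s <;> simp [perceived, hi]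

theorem perceived_succ_of_not_mem {i : V} (hi : i ∉ C) (s : ℕ) (j : V) :
    perceived G C β (s + 1) i j =
      min (perceived G C β s i j) (1 + ⨅ k ∈ G.neighborSet i, perceived G C β s k j) := by
  simp [perceived, hi]

theorem perceived_antitone (i j : V) : Antitone fun s => perceived G C β s i j :=
  antitone_nat_of_succ_le fun s => by
    by_cases hi : i ∈ C
    · simp only [perceived_of_mem hi, le_refl]
    · rw [perceived_succ_of_not_mem hi]
      exact min_le_left _ _

theorem one_add_iInf_rho_le_perceived {i t : V} (hi : i ∉ C) (hit : i ≠ t) {s : ℕ}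
    (hs : s ≤ Fintype.card V) :
    1 + ⨅ k ∈ G.neighborSet i, rho G C β k t ≤ perceived G C β s i t := by
  induction s with
  | zero => simp [perceived, hi, hit]
  | succ s ih =>
    rw [perceived_succ_of_not_mem hi]
    refine le_min (ih (by omega)) ?_
    gcongr with k
    exact perceived_antitone k t (by omega)

theorem one_add_rho_le_of_inForwardSet {s t k : V} (hs : s ∉ C)
    (hk : inForwardSet G (rho G C β) s t k) : 1 + rho G C β k t ≤ rho G C β s t :=
  calc 1 + rho G C β k t ≤ 1 + ⨅ k' ∈ G.neighborSet s, rho G C β k' t := by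
        gcongr
        exact le_iInf₂ hk.2.2
    _ ≤ rho G C β s t := one_add_iInf_rho_le_perceived hs hk.1 le_rfl

theorem perceived_le_dist (hG : G.Connected) (hβ : ∀ c ∈ C, ∀ t, β c t ≤ G.dist c t) :
    ∀ {s : ℕ} {i t : V}, G.dist i t ≤ s → perceived G C β s i t ≤ G.dist i t := by
  intro s
  induction s with
  | zero =>
    intro i t h
    by_cases hi : i ∈ C
    · rw [perceived_of_mem hi]
      exact hβ i hi t
    · obtain rfl : i = t := hG.dist_eq_zero_iff.mp (by omega)
      simp [perceived, hi]
  | succ s ih =>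
    intro i t h
    by_cases hi : i ∈ C
    · rw [perceived_of_mem hi]
      exact hβ i hi t
    rw [perceived_succ_of_not_mem hi]
    by_cases hit : i = t
    · subst hit
      exact (min_le_left _ _).trans (ih (by simp))
    obtain ⟨j, hj, hdj⟩ := (hG i t).exists_adj_dist_add_one hit
    calc _ ≤ 1 + ⨅ k ∈ G.neighborSet i, perceived G C β s k t := min_le_right _ _
      _ ≤ 1 + perceived G C β s j t := by
        gcongr
        exact iInf₂_le j hj
      _ ≤ 1 + G.dist j t := by
        gcongr
        exact ih (by omega)
      _ = G.dist i t := by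
        rw [← hdj]
        push_cast
        ring

theorem rho_le_dist (hG : G.Connected) (hβ : ∀ c ∈ C, ∀ t, β c t ≤ G.dist c t) (i t : V) :
    rho G C β i t ≤ G.dist i t :=
  perceived_le_dist hG hβ (hG.dist_lt_card i t).le

theorem dist_le_perceived_add {m : ℕ∞} (hβ : ∀ c ∈ C, ∀ t, (G.dist c t : ℕ∞) ≤ β c t + m)
    (s : ℕ) (i t : V) : (G.dist i t : ℕ∞) ≤ perceived G C β s i t + m := by
  induction s generalizing i with
  | zero =>
    by_cases hi : i ∈ C
    · rw [perceived_of_mem hi]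
      exact hβ i hi t
    by_cases hit : i = t
    · simp [hit]
    · simp [perceived, hi, hit]
  | succ s ih =>
    by_cases hi : i ∈ C
    · rw [perceived_of_mem hi]
      exact hβ i hi t
    rw [perceived_succ_of_not_mem hi, ← min_add_add_right, le_min_iff]
    refine ⟨ih i, ?_⟩
    rw [add_assoc, ENat.iInf₂_add, ENat.add_iInf₂]
    refine le_iInf₂ fun k hk => ?_
    calc (G.dist i t : ℕ∞) ≤ 1 + G.dist k t := by
          rw [add_comm]
          exact_mod_cast (hk : G.Adj i k).dist_le_dist_add_one t
      _ ≤ 1 + (perceived G C β s k t + m) := by gcongr; exact ih k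

theorem isCorrPath_refl (t : V) : IsCorrPath G C β t t 0 fun _ => t :=
  ⟨rfl, rfl, fun _ h => absurd h (Nat.not_lt_zero _), fun _ h => absurd h (Nat.not_lt_zero _)⟩

theorem IsCorrPath.cons {s u t : V} {ℓ : ℕ} {v : ℕ → V} (hv : IsCorrPath G C β u t ℓ v)
    (hsu : G.Adj s u) (hfwd : s ∉ C → inForwardSet G (rho G C β) s t u) :
    IsCorrPath G C β s t (ℓ + 1) fun i => if i = 0 then s else v (i - 1) := by
  obtain ⟨hv0, hvℓ, hadj, hforward⟩ := hv
  refine ⟨by simp, by simp [hvℓ], fun i hi => ?_, fun i hi hiC => ?_⟩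
  · cases i with
    | zero => simpa [hv0] using hsu
    | succ i => simpa using hadj i (by omega)
  · cases i with
    | zero => simpa [hv0] using hfwd (by simpa using hiC)
    | succ i => simpa using hforward i (by omega) (by simpa using hiC)

end

section

variable [DecidableEq V] {G : SimpleGraph V}

theorem betaStar_le_dist (hG : G.Connected) (c t : V) : betaStar G c t ≤ G.dist c t := by
  unfold betaStar
  split_ifs with hct
  · simp
  · have := hG.pos_dist_of_ne hct
    exact_mod_cast (by omega : max (G.dist c t - 2) 1 ≤ G.dist c t)

theorem dist_le_betaStar_add_two (c t : V) : (G.dist c t : ℕ∞) ≤ betaStar G c t + 2 := by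
  unfold betaStar
  split_ifs with hct
  · simp [hct]
  · exact_mod_cast (by omega : G.dist c t ≤ max (G.dist c t - 2) 1 + 2)

variable [Fintype V] (C : Finset V)

theorem exists_natCast_eq_rho_betaStar (hG : G.Connected) (i t : V) :
    ∃ r : ℕ, rho G C (betaStar G) i t = r ∧ r ≤ G.dist i t ∧ G.dist i t ≤ r + 2 := by
  have hle := rho_le_dist (C := C) hG (fun c _ => betaStar_le_dist hG c) i t
  have hge : (G.dist i t : ℕ∞) ≤ rho G C (betaStar G) i t + 2 :=
    dist_le_perceived_add (fun c _ => dist_le_betaStar_add_two c) _ i t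
  lift rho G C (betaStar G) i t to ℕ using ne_top_of_le_ne_top (ENat.natCast_ne_top _) hle
    with r hr
  exact ⟨r, rfl, by exact_mod_cast hle, by exact_mod_cast hge⟩

theorem exists_inForwardSet_dist_le (hG : G.Connected) {s t : V} (hst : s ≠ t) :
    ∃ k, inForwardSet G (rho G C (betaStar G)) s t k ∧ G.dist k t ≤ G.dist s t := by
  choose r hr using fun x => exists_natCast_eq_rho_betaStar C hG x t
  have hforward : ∀ k, G.Adj s k → (∀ k', G.Adj s k' → r k ≤ r k') →
      inForwardSet G (rho G C (betaStar G)) s t k := fun k hk hmin =>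
    ⟨hst, hk, fun k' hk' => by rw [(hr k).1, (hr k').1]; exact_mod_cast hmin k' hk'⟩
  obtain ⟨j, hj, hdj⟩ := (hG s t).exists_adj_dist_add_one hst
  obtain ⟨k, hk, hmin⟩ := Set.exists_min_image (G.neighborSet s) r (Set.toFinite _) ⟨j, hj⟩
  by_cases hdk : G.dist k t ≤ G.dist s t
  · exact ⟨k, hforward k hk hmin, hdk⟩
  have hdk_le := hk.symm.dist_le_dist_add_one t
  have hrj := (hr j).2.1
  have hrk := (hr k).2.2
  exact ⟨j, hforward j hj fun k' hk' => le_trans (by omega) (hmin k' hk'), by omega⟩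

theorem exists_isCorrPath_betaStar (hG : G.Connected) (s t : V) :
    ∃ ℓ v, IsCorrPath G C (betaStar G) s t ℓ v := by
  choose r hr using fun x => exists_natCast_eq_rho_betaStar C hG x t
  induction s using (measure fun x => r x + 2 * G.dist x t).wf.induction with
  | h s ih =>
    by_cases hst : s = t
    · subst hst
      exact ⟨0, _, isCorrPath_refl s⟩
    by_cases hs : s ∈ C
    · obtain ⟨j, hj, hdj⟩ := (hG s t).exists_adj_dist_add_one hst
      have hrs := (hr s).2.2
      have hrj := (hr j).2.1
      obtain ⟨ℓ, v, hv⟩ := ih j (show r j + 2 * G.dist j t < r s + 2 * G.dist s t by omega)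
      exact ⟨ℓ + 1, _, hv.cons hj fun h => absurd hs h⟩
    · obtain ⟨k, hk, hdk⟩ := exists_inForwardSet_dist_le C hG hst
      have hρk := one_add_rho_le_of_inForwardSet hs hk
      rw [(hr k).1, (hr s).1] at hρk
      have hrk : 1 + r k ≤ r s := by exact_mod_cast hρk
      obtain ⟨ℓ, v, hv⟩ := ih k (show r k + 2 * G.dist k t < r s + 2 * G.dist s t by omega)
      exact ⟨ℓ + 1, _, hv.cons hk.2.1 fun _ => hk⟩

end

theorem independent_lies_admissible_general [Fintype V] [DecidableEq V] (G : SimpleGraph V)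
    (hG : G.Connected) (C : Finset V) :
    Admissible G C (betaStar G) :=
  fun s t _ => exists_isCorrPath_betaStar C hG s t

/-- For every set `C` of colluding agents, if each colluding agent
independently broadcasts `max (d(c,t) - 2) 1` for all `t ≠ c`, then the resulting
joint broadcast is admissible. -/
theorem independent_lies_admissible [Fintype V] [DecidableEq V] (G : SimpleGraph V)
    (hG : G.Connected) (hn : 2 ≤ Fintype.card V) (C : Finset V) :
    Admissible G C (betaStar G) :=
  independent_lies_admissible_general G hG C

end Intercept
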